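/- arXiv:1711.11257 — 2 statements merged into one kernel-verified Lean document; each statement's English description precedes it below -/
import Mathlib

section
/- A graph G of order n is Hamilton-connected if and only if its (n+1)-closure cl_{n+1}(G) is Hamilton-connected. -/
open Classical SimpleGraph

noncomputable section

/-- Degree of a vertex (via `Set.ncard`, avoiding decidability assumptions). -/
noncomputable def gdeg {V : Type*} (G : SimpleGraph V) (v : V) : ℕ :=
  (G.neighborSet v).ncard

/-- A graph is Hamilton-connected if every two distinct vertices are joined by a
Hamiltonian path. -/
def HamConnected {V : Type*} (G : SimpleGraph V) : Prop :=
  ∀ u v : V, u ≠ v → ∃ p : G.Walk u v, p.IsHamiltonian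

/-- One closure step: simultaneously join all nonadjacent pairs with degree sum ≥ k. -/
noncomputable def closureStep {V : Type*} (k : ℕ) (G : SimpleGraph V) : SimpleGraph V :=
  G ⊔ SimpleGraph.fromRel (fun u v => ¬ G.Adj u v ∧ k ≤ gdeg G u + gdeg G v)

/-- The `k`-closure of a graph: repeatedly join nonadjacent pairs of vertices with
degree sum at least `k` until no such pair remains. -/
noncomputable def kClosure {V : Type*} [Fintype V] (k : ℕ) (G : SimpleGraph V) : SimpleGraph V :=
  (closureStep k)^[Fintype.card V * Fintype.card V] G

/-!
If `u, v` have degree sum at least `n + 1` and `G + uv` has a Hamiltonian `x`–`y` path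
`x = w₀, …, w_{n-1} = y` using the edge `uv = w_j w_{j+1}`, then among the `n - 2` indices
`i ≠ j` with `i + 1 < n` there are at least `deg u - 1` with `u ~ w_i` and at least `deg v - 1`
with `v ~ w_{i+1}`, so some `i` has both. Reversing the block `w_{i+1}, …, w_j` (if `i < j`) or
`w_{j+1}, …, w_i` (if `j < i`) gives a Hamiltonian `x`–`y` path avoiding `uv`.
The closure adds only such edges, each with the degree condition in the current graph.
-/

namespace SimpleGraph

variable {V : Type*} {G : SimpleGraph V}

/-- A Hamiltonian path on `n` vertices, encoded by its vertex sequence `f 0, …, f (n - 1)`. -/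
structure IsHamSeq (G : SimpleGraph V) (n : ℕ) (f : ℕ → V) : Prop where
  bijOn : Set.BijOn f (Set.Iio n) Set.univ
  adj : ∀ i, i + 1 < n → G.Adj (f i) (f (i + 1))

lemma exists_walk_support_eq_map_range (f : ℕ → V) :
    ∀ n, (∀ i < n, G.Adj (f i) (f (i + 1))) →
      ∃ p : G.Walk (f 0) (f n), p.support = (List.range (n + 1)).map f
  | 0, _ => ⟨Walk.nil, rfl⟩
  | n + 1, h => by
    obtain ⟨p, hp⟩ := exists_walk_support_eq_map_range f n fun i hi => h i (by omega)
    refine ⟨p.concat (h n n.lt_succ_self), ?_⟩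
    rw [Walk.support_concat, hp, List.range_succ (n := n + 1), List.map_append, List.map_singleton]

lemma exists_isHamiltonian_iff [Fintype V] {x y : V} :
    (∃ p : G.Walk x y, p.IsHamiltonian) ↔
      ∃ f, G.IsHamSeq (Fintype.card V) f ∧ f 0 = x ∧ f (Fintype.card V - 1) = y := by
  have hcard : Fintype.card V = Fintype.card V - 1 + 1 :=
    (Nat.succ_pred_eq_of_pos (Fintype.card_pos_iff.2 ⟨x⟩)).symm
  constructor
  · rintro ⟨p, hp⟩
    have hlen : p.length + 1 = Fintype.card V := by rw [hp.length_eq]; omega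
    have hIio : Set.Iio (Fintype.card V) = {i | i ≤ p.length} := by
      ext i; rw [Set.mem_Iio, Set.mem_ofPred_eq]; omega
    refine ⟨p.getVert, ⟨⟨fun _ _ => trivial, ?_, ?_⟩, fun i hi => p.adj_getVert_succ (by omega)⟩,
      p.getVert_zero, by rw [← hlen, Nat.add_sub_cancel, p.getVert_length]⟩
    · rw [hIio]; exact hp.isPath.getVert_injOn
    · intro w _
      obtain ⟨i, hi, hle⟩ := Walk.mem_support_iff_exists_getVert.1 (hp.mem_support w)
      exact ⟨i, by rw [hIio]; exact hle, hi⟩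
  · rintro ⟨f, hf, rfl, rfl⟩
    obtain ⟨p, hp⟩ :=
      exists_walk_support_eq_map_range f (Fintype.card V - 1) fun i hi => hf.adj i (by omega)
    refine ⟨p, fun w => List.count_eq_one_of_mem ?_ ?_⟩
    · rw [hp, ← hcard]
      exact List.nodup_range.map_on fun i hi j hj =>
        hf.bijOn.injOn (List.mem_range.1 hi) (List.mem_range.1 hj)
    · obtain ⟨i, hi, rfl⟩ := hf.bijOn.surjOn (Set.mem_univ w)
      rw [hp, ← hcard]
      exact List.mem_map_of_mem (List.mem_range.2 hi)

def segmentReverse (a b k : ℕ) : ℕ :=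
  if a < k ∧ k ≤ b then a + b + 1 - k else k

lemma segmentReverse_involutive (a b : ℕ) : Function.Involutive (segmentReverse a b) := by
  intro k
  unfold segmentReverse
  split_ifs <;> omega

lemma segmentReverse_eq_self {a b k : ℕ} (h : k ≤ a ∨ b < k) : segmentReverse a b k = k := by
  unfold segmentReverse
  split_ifs <;> omega

lemma bijOn_segmentReverse {a b n : ℕ} (hbn : b < n) :
    Set.BijOn (segmentReverse a b) (Set.Iio n) (Set.Iio n) := by
  have hmaps : Set.MapsTo (segmentReverse a b) (Set.Iio n) (Set.Iio n) := by
    intro k hk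
    simp only [Set.mem_Iio, segmentReverse] at hk ⊢
    split_ifs <;> omega
  exact Set.InvOn.bijOn ⟨fun k _ => segmentReverse_involutive a b k,
    fun k _ => segmentReverse_involutive a b k⟩ hmaps hmaps

lemma exists_isHamSeq_of_twoOpt {n a b : ℕ} {f : ℕ → V} (hf : Set.BijOn f (Set.Iio n) Set.univ)
    (hab : a < b) (hbn : b + 1 < n)
    (hadj : ∀ t, t + 1 < n → t ≠ a → t ≠ b → G.Adj (f t) (f (t + 1)))
    (ha : G.Adj (f a) (f b)) (hb : G.Adj (f (a + 1)) (f (b + 1))) :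
    ∃ g, G.IsHamSeq n g ∧ g 0 = f 0 ∧ g (n - 1) = f (n - 1) := by
  refine ⟨f ∘ segmentReverse a b, ⟨hf.comp (bijOn_segmentReverse (by omega)), fun t ht => ?_⟩,
    congrArg f (segmentReverse_eq_self (by omega)),
    congrArg f (segmentReverse_eq_self (by omega))⟩
  simp only [Function.comp_apply, segmentReverse]
  rcases lt_trichotomy t a with h | rfl | h
  · rw [if_neg (by omega), if_neg (by omega)]; exact hadj t ht (by omega) (by omega)
  · rw [if_neg (by omega), if_pos (by omega), show t + b + 1 - (t + 1) = b by omega]; exact ha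
  rcases lt_trichotomy t b with h' | rfl | h'
  · rw [if_pos (by omega), if_pos (by omega), show a + b + 1 - t = a + b - t + 1 by omega,
      show a + b + 1 - (t + 1) = a + b - t by omega]
    exact (hadj _ (by omega) (by omega) (by omega)).symm
  · rw [if_pos (by omega), if_neg (by omega), show a + t + 1 - t = a + 1 by omega]; exact hb
  · rw [if_neg (by omega), if_neg (by omega)]; exact hadj t ht (by omega) (by omega)

lemma gdeg_le_card_of_subset_image {w : V} (g : ℕ → V) (s : Finset ℕ)
    (h : G.neighborSet w ⊆ g '' s) : gdeg G w ≤ s.card :=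
  (Set.ncard_le_ncard h (s.finite_toSet.image g)).trans
    ((Set.ncard_image_le s.finite_toSet).trans (Set.ncard_coe_finset s).le)

/-- The indices `i ≠ j` with `f j ~ f i` and those with `f (j + 1) ~ f (i + 1)` lie among
`n - 2` candidates and number at least `n - 1` together. -/
lemma exists_crossing_of_degree_sum {n j : ℕ} {f : ℕ → V} (hf : Set.SurjOn f (Set.Iio n) Set.univ)
    (hj : j + 1 < n) (hdeg : n + 1 ≤ gdeg G (f j) + gdeg G (f (j + 1))) :
    ∃ i, i + 1 < n ∧ i ≠ j ∧ G.Adj (f j) (f i) ∧ G.Adj (f (j + 1)) (f (i + 1)) := by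
  set S := (Finset.range (n - 1)).filter fun i => G.Adj (f j) (f i)
  set T := (Finset.range (n - 1)).filter fun i => G.Adj (f (j + 1)) (f (i + 1))
  have hS : gdeg G (f j) ≤ S.card + 1 := by
    refine (gdeg_le_card_of_subset_image f (insert (n - 1) S) fun w hw => ?_).trans
      (Finset.card_insert_le _ _)
    obtain ⟨i, hi, rfl⟩ := hf (Set.mem_univ w)
    rw [mem_neighborSet] at hw
    simp only [Set.mem_Iio] at hi
    refine ⟨i, ?_, rfl⟩
    simp only [S, Finset.coe_insert, Finset.coe_filter, Finset.mem_range, Set.mem_insert_iff,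
      Set.mem_ofPred_eq, hw, and_true]
    omega
  have hT : gdeg G (f (j + 1)) ≤ T.card + 1 := by
    refine (gdeg_le_card_of_subset_image f (insert 0 (T.image Nat.succ)) fun w hw => ?_).trans
      ((Finset.card_insert_le _ _).trans (Nat.succ_le_succ Finset.card_image_le))
    obtain ⟨i, hi, rfl⟩ := hf (Set.mem_univ w)
    rw [mem_neighborSet] at hw
    simp only [Set.mem_Iio] at hi
    refine ⟨i, ?_, rfl⟩
    rcases i with _ | i
    · simp
    · simp only [Finset.coe_insert, Finset.coe_image, Set.mem_insert_iff, Set.mem_image]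
      exact Or.inr ⟨i, Finset.mem_filter.2 ⟨Finset.mem_range.2 (by omega), hw⟩, rfl⟩
  have hunion : (S ∪ T).card ≤ n - 2 := by
    have : S ∪ T ⊆ (Finset.range (n - 1)).erase j := by
      intro i hi
      simp only [S, T, Finset.mem_union, Finset.mem_filter, Finset.mem_range] at hi
      rw [Finset.mem_erase, Finset.mem_range]
      rcases hi with ⟨hi, hadj⟩ | ⟨hi, hadj⟩ <;> refine ⟨?_, hi⟩ <;> rintro rfl
      exacts [G.loopless.irrefl _ hadj, G.loopless.irrefl _ hadj]
    calc (S ∪ T).card ≤ ((Finset.range (n - 1)).erase j).card := Finset.card_le_card this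
      _ = n - 2 := by
        rw [Finset.card_erase_of_mem (Finset.mem_range.2 (by omega)), Finset.card_range]; omega
  obtain ⟨i, hi⟩ : (S ∩ T).Nonempty := by
    rw [← Finset.card_pos]
    have := Finset.card_union_add_card_inter S T
    omega
  simp only [S, T, Finset.mem_inter, Finset.mem_filter, Finset.mem_range] at hi
  refine ⟨i, by omega, ?_, hi.1.2, hi.2.2⟩
  rintro rfl
  exact G.loopless.irrefl _ hi.1.2

lemma IsHamSeq.exists_of_sup_edge {n : ℕ} {u v : V} {f : ℕ → V}
    (hf : (G ⊔ edge u v).IsHamSeq n f) (hdeg : n + 1 ≤ gdeg G u + gdeg G v) :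
    ∃ g, G.IsHamSeq n g ∧ g 0 = f 0 ∧ g (n - 1) = f (n - 1) := by
  by_cases hG : ∀ t, t + 1 < n → G.Adj (f t) (f (t + 1))
  · exact ⟨f, ⟨hf.bijOn, hG⟩, rfl, rfl⟩
  push Not at hG
  obtain ⟨j, hj, hbad⟩ := hG
  have edge_of_not_adj :
      ∀ t, t + 1 < n → ¬G.Adj (f t) (f (t + 1)) → s(f t, f (t + 1)) = s(u, v) :=
    fun t ht hnt => Sym2.eq_iff.2 (((sup_adj _ _ _ _).1 (hf.adj t ht)).resolve_left hnt
      |> (edge_adj _ _ _ _).1 |>.1)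
  have huv := edge_of_not_adj j hj hbad
  -- The path passes through `u` and `v` only once, hence uses `uv` only at `j`.
  have hother : ∀ t, t + 1 < n → t ≠ j → G.Adj (f t) (f (t + 1)) := by
    intro t ht htj
    by_contra hnt
    have hinj := hf.bijOn.injOn
    rcases Sym2.eq_iff.1 ((edge_of_not_adj t ht hnt).trans huv.symm) with ⟨h₁, -⟩ | ⟨h₁, h₂⟩
    · exact htj (hinj (Set.mem_Iio.2 (by omega)) (Set.mem_Iio.2 (by omega)) h₁)
    · have := hinj (Set.mem_Iio.2 (by omega)) (Set.mem_Iio.2 (by omega)) h₁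
      have := hinj (Set.mem_Iio.2 (by omega)) (Set.mem_Iio.2 (by omega)) h₂
      omega
  have hdeg' : n + 1 ≤ gdeg G (f j) + gdeg G (f (j + 1)) := by
    rcases Sym2.eq_iff.1 huv with ⟨h₁, h₂⟩ | ⟨h₁, h₂⟩ <;> rw [h₁, h₂] <;> omega
  obtain ⟨i, hi, hij, h₁, h₂⟩ := exists_crossing_of_degree_sum hf.bijOn.surjOn hj hdeg'
  rcases hij.lt_or_gt with h | h
  · exact exists_isHamSeq_of_twoOpt hf.bijOn h hj (fun t ht _ htj => hother t ht htj)
      h₁.symm h₂.symm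
  · exact exists_isHamSeq_of_twoOpt hf.bijOn h hi (fun t ht htj _ => hother t ht htj) h₁ h₂

end SimpleGraph

section

variable {V : Type*} {G H : SimpleGraph V}

lemma gdeg_mono [Finite V] (hGH : G ≤ H) (w : V) : gdeg G w ≤ gdeg H w :=
  Set.ncard_le_ncard (neighborSet_mono hGH w) (Set.toFinite _)

lemma HamConnected.mono (hGH : G ≤ H) (hG : HamConnected G) : HamConnected H := by
  intro x y hxy
  obtain ⟨p, hp⟩ := hG x y hxy
  exact ⟨p.mapLe hGH, fun w => by rw [Walk.support_mapLe_eq_support]; exact hp w⟩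

lemma HamConnected.of_sup_edge [Fintype V] {u v : V}
    (hdeg : Fintype.card V + 1 ≤ gdeg G u + gdeg G v) (h : HamConnected (G ⊔ edge u v)) :
    HamConnected G := by
  intro x y hxy
  obtain ⟨f, hf, rfl, rfl⟩ := exists_isHamiltonian_iff.1 (h x y hxy)
  obtain ⟨g, hg, h₀, hₙ⟩ := hf.exists_of_sup_edge hdeg
  exact exists_isHamiltonian_iff.2 ⟨g, hg, h₀, hₙ⟩

lemma HamConnected.of_le_of_degree_sum [Fintype V] (hGH : G ≤ H)
    (hdeg : ∀ a b, H.Adj a b → ¬G.Adj a b → Fintype.card V + 1 ≤ gdeg G a + gdeg G b)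
    (hH : HamConnected H) : HamConnected G := by
  suffices ∀ K, G ≤ K → K ≤ H → HamConnected K from this G le_rfl hGH
  intro K
  induction K using WellFoundedGT.induction with
  | _ K ih =>
  intro hGK hKH
  by_cases hK : H ≤ K
  · exact hH.mono hK
  obtain ⟨a, b, hab, hnab⟩ : ∃ a b, H.Adj a b ∧ ¬K.Adj a b := by
    by_contra! h
    exact hK fun a b hab => h a b hab
  have hlt : K < K ⊔ edge a b := left_lt_sup.2 (by simp [H.ne_of_adj hab, hnab])
  have hle : K ⊔ edge a b ≤ H := sup_le hKH ((edge_le_iff H).2 (Or.inr hab))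
  refine HamConnected.of_sup_edge ?_ (ih _ hlt (hGK.trans le_sup_left) hle)
  calc Fintype.card V + 1 ≤ gdeg G a + gdeg G b := hdeg a b hab fun h => hnab (hGK h)
    _ ≤ gdeg K a + gdeg K b := add_le_add (gdeg_mono hGK a) (gdeg_mono hGK b)

lemma HamConnected.of_closureStep [Fintype V]
    (h : HamConnected (closureStep (Fintype.card V + 1) G)) : HamConnected G := by
  refine h.of_le_of_degree_sum le_sup_left fun a b hab hnab => ?_
  rcases ((sup_adj _ _ _ _).1 hab).resolve_left hnab with ⟨-, ⟨-, hle⟩ | ⟨-, hle⟩⟩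
  · exact hle
  · omega

lemma le_iterate_closureStep (k m : ℕ) : G ≤ (closureStep k)^[m] G := by
  induction m with
  | zero => exact le_rfl
  | succ m ih =>
    rw [Function.iterate_succ_apply']
    exact ih.trans le_sup_left

lemma HamConnected.of_iterate_closureStep [Fintype V] (m : ℕ)
    (h : HamConnected ((closureStep (Fintype.card V + 1))^[m] G)) : HamConnected G := by
  induction m generalizing G with
  | zero => exact h
  | succ m ih => exact (ih h).of_closureStep

end

/-- **Bondy–Chvátal (Lemma 2.2).** A graph `G` of order `n` is Hamilton-connected if and only if
its `(n+1)`-closure is Hamilton-connected. -/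
theorem hamConnected_iff_closure {V : Type*} [Fintype V] (G : SimpleGraph V) :
    HamConnected G ↔ HamConnected (kClosure (Fintype.card V + 1) G) :=
  ⟨HamConnected.mono (le_iterate_closureStep _ _), HamConnected.of_iterate_closureStep _⟩

end
end

section
/- For each graph G in the family S_k^{(1)}(n) ∪ T_k^{(1)}(n), the signless Laplacian spectral radius satisfies q(G) ≥ 2n − 2k. -/
open Classical SimpleGraph

noncomputable section

/-- The signless Laplacian matrix `Q(G) = D(G) + A(G)`. -/
noncomputable def signlessLap {V : Type*} [Fintype V] [DecidableEq V] (G : SimpleGraph V) :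
    Matrix V V ℝ :=
  Matrix.of fun i j => (if i = j then (gdeg G i : ℝ) else 0) + (if G.Adj i j then 1 else 0)

/-- The signless Laplacian spectral radius: largest eigenvalue of `Q(G)`. -/
noncomputable def qrad {V : Type*} [Fintype V] [DecidableEq V] (G : SimpleGraph V) : ℝ :=
  sSup (spectrum ℝ (signlessLap G))

/-- `S_n^k = K_k ∨ (K_{n-2k+1} + (k-1)K_1)`, realized on `Fin n`: vertices with value `< k`
form the dominating clique `K_k`, vertices with value `≤ n-k` form the clique `K_{n-k+1}`,
and the remaining `k-1` vertices are adjacent exactly to the first `k` vertices. -/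
noncomputable def Sgraph (n k : ℕ) : SimpleGraph (Fin n) :=
  SimpleGraph.fromRel (fun i j => i.val < k ∨ (i.val ≤ n - k ∧ j.val ≤ n - k))

/-- `T_n^k = K_2 ∨ (K_{n-k-1} + K_{k-1})`, realized on `Fin n`: vertices with value `< 2`
are the dominating `K_2`, values `≤ n-k` form the clique `K_{n-k+1}`, and values `> n-k`
(of which there are `k-1`) form a clique joined to the first two vertices. -/
noncomputable def Tgraph (n k : ℕ) : SimpleGraph (Fin n) :=
  SimpleGraph.fromRel (fun i j =>
    i.val < 2 ∨ (i.val ≤ n - k ∧ j.val ≤ n - k) ∨ (n - k < i.val ∧ n - k < j.val))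

/-- Edges of `S_n^k` (resp. `T_n^k`) with both endpoints of degree `n-1` or `n-k`,
i.e. both endpoints with value `≤ n-k`. -/
def E0 {n : ℕ} (G : SimpleGraph (Fin n)) (k : ℕ) : Set (Sym2 (Fin n)) :=
  {e | e ∈ G.edgeSet ∧ ∀ i ∈ e, i.val ≤ n - k}

/-- The family `𝒮_k^{(1)}(n)`. -/
def SFam1 (n k : ℕ) : Set (SimpleGraph (Fin n)) :=
  {G | ∃ E' : Set (Sym2 (Fin n)), E' ⊆ E0 (Sgraph n k) k ∧ E'.ncard ≤ k * (k - 1) / 4 ∧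
    G = (Sgraph n k).deleteEdges E'}

/-- The family `𝒯_k^{(1)}(n)`. -/
def TFam1 (n k : ℕ) : Set (SimpleGraph (Fin n)) :=
  {G | ∃ E' : Set (Sym2 (Fin n)), E' ⊆ E0 (Tgraph n k) k ∧ E'.ncard ≤ (k - 1) / 2 ∧
    G = (Tgraph n k).deleteEdges E'}

/-!
The vertices `A = {i ≤ n - k}` form a clique of size `n - k + 1` in `S_n^k` and `T_n^k`. For the
indicator vector `x` of `A`, `xᵀ Q x = ∑_{v ∈ A} (d(v) + |N(v) ∩ A|) = 4 e(A) + e(A, Aᶜ)`.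
Deleting `E' ⊆ E₀` lowers `4 e(A)` by at most `4 |E'|` from `2 |A| (|A| - 1)`, while the `m`
dominating vertices (`m = k` resp. `2`) lie in `A` and keep all their `k - 1` edges to `Aᶜ`;
the bound on `|E'|` is exactly `4 |E'| ≤ m (k - 1)`. So `xᵀ Q x ≥ 2 (|A| - 1) ‖x‖²`, and
`q(G) ≥ 2 (n - k)` by the Rayleigh principle.
-/

open Finset Matrix MatrixOrder

theorem Matrix.IsHermitian.dotProduct_mulVec_le_sSup_spectrum_mul {N : Type*} [Fintype N]
    [DecidableEq N] {M : Matrix N N ℝ} (hM : M.IsHermitian) (x : N → ℝ) :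
    x ⬝ᵥ (M *ᵥ x) ≤ sSup (spectrum ℝ M) * (x ⬝ᵥ x) := by
  have hle : M ≤ algebraMap ℝ _ (sSup (spectrum ℝ M)) :=
    le_algebraMap_of_spectrum_le (fun c hc => le_csSup finite_real_spectrum.bddAbove hc)
      hM.isSelfAdjoint
  simpa [Algebra.algebraMap_eq_smul_one, sub_mulVec, dotProduct_sub, smul_mulVec] using
    (le_iff.mp hle).dotProduct_mulVec_nonneg x

section

variable {V : Type*} [Fintype V]

theorem gdeg_eq_degree (G : SimpleGraph V) [DecidableRel G.Adj] (v : V) :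
    gdeg G v = G.degree v := by
  rw [gdeg, ← card_neighborSet_eq_degree, Set.ncard_eq_toFinset_card', Set.toFinset_card]

variable [DecidableEq V]

theorem sum_degree_fromEdgeSet_le (E : Set (Sym2 V)) :
    ∑ v, (fromEdgeSet E).degree v ≤ 2 * E.ncard := by
  rw [sum_degrees_eq_twice_card_edges, ← Set.ncard_coe_finset, coe_edgeFinset,
    edgeSet_fromEdgeSet]
  exact Nat.mul_le_mul_left 2 (Set.ncard_le_ncard Set.sdiff_subset E.toFinite)

theorem signlessLap_eq_degMatrix_add_adjMatrix (G : SimpleGraph V) [DecidableRel G.Adj] :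
    signlessLap G = G.degMatrix ℝ + G.adjMatrix ℝ := by
  ext i j
  simp [signlessLap, degMatrix, diagonal_apply, gdeg_eq_degree]

theorem isHermitian_signlessLap (G : SimpleGraph V) : (signlessLap G).IsHermitian := by
  rw [signlessLap_eq_degMatrix_add_adjMatrix]
  exact (isHermitian_degMatrix ℝ G).add (isHermitian_adjMatrix ℝ G)

/-- The left-hand side is `xᵀ Q(G) x` for the indicator vector `x` of `s`. -/
theorem sum_degree_add_card_inter_le_qrad_mul_card (G : SimpleGraph V) [DecidableRel G.Adj]
    (s : Finset V) :
    ((∑ v ∈ s, (G.degree v + #(G.neighborFinset v ∩ s)) : ℕ) : ℝ) ≤ qrad G * #s := by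
  set x : V → ℝ := fun v => if v ∈ s then 1 else 0
  have hxx : x ⬝ᵥ x = #s := by simp [x, dotProduct]
  have hxQx :
      x ⬝ᵥ (signlessLap G *ᵥ x) = ∑ v ∈ s, (G.degree v + #(G.neighborFinset v ∩ s)) := by
    rw [signlessLap_eq_degMatrix_add_adjMatrix, add_mulVec, dotProduct_add,
      dotProduct_mulVec_degMatrix]
    simp [x, dotProduct, sum_add_distrib]
  rw [← hxx, ← hxQx]
  exact (isHermitian_signlessLap G).dotProduct_mulVec_le_sSup_spectrum_mul x

variable {H : SimpleGraph V} {s : Finset V}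

theorem card_sub_one_le_card_neighborFinset_inter_add_degree (hs : H.IsClique (s : Set V))
    (E : Set (Sym2 V)) {v : V} (hv : v ∈ s) :
    #s - 1 ≤ #((H.deleteEdges E).neighborFinset v ∩ s) + (fromEdgeSet E).degree v := by
  have hsub : s.erase v ⊆
      ((H.deleteEdges E).neighborFinset v ∩ s) ∪ (fromEdgeSet E).neighborFinset v := by
    intro u hu
    obtain ⟨huv, hus⟩ := mem_erase.mp hu
    have hadj : H.Adj v u := hs hv hus (Ne.symm huv)
    by_cases he : s(v, u) ∈ E
    · exact mem_union_right _ (by simp [he, Ne.symm huv])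
    · exact mem_union_left _ (by simp [hadj, he, hus])
  calc #s - 1 = #(s.erase v) := (card_erase_of_mem hv).symm
    _ ≤ _ := (card_le_card hsub).trans (card_union_le _ _)

theorem card_mul_card_sub_one_le_sum_card_neighborFinset_inter (hs : H.IsClique (s : Set V))
    (E : Set (Sym2 V)) :
    #s * (#s - 1) ≤ ∑ v ∈ s, #((H.deleteEdges E).neighborFinset v ∩ s) + 2 * E.ncard := by
  calc #s * (#s - 1) = ∑ v ∈ s, (#s - 1) := by rw [sum_const, smul_eq_mul]
    _ ≤ ∑ v ∈ s, (#((H.deleteEdges E).neighborFinset v ∩ s) + (fromEdgeSet E).degree v) :=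
        sum_le_sum fun v hv => card_sub_one_le_card_neighborFinset_inter_add_degree hs E hv
    _ ≤ ∑ v ∈ s, #((H.deleteEdges E).neighborFinset v ∩ s) +
          ∑ v, (fromEdgeSet E).degree v := by
        rw [sum_add_distrib]
        gcongr
        exact subset_univ s
    _ ≤ _ := by grw [sum_degree_fromEdgeSet_le E]

theorem card_compl_le_card_neighborFinset_sdiff {E : Set (Sym2 V)}
    (hE : ∀ e ∈ E, ∀ v ∈ e, v ∈ s) {v : V} (hv : ∀ u ∉ s, H.Adj v u) :
    #sᶜ ≤ #((H.deleteEdges E).neighborFinset v \ s) := by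
  refine card_le_card fun u hu => ?_
  have hus : u ∉ s := mem_compl.mp hu
  have he : s(v, u) ∉ E := fun he => hus (hE _ he u (Sym2.mem_mk_right v u))
  simp [hv u hus, he, hus]

theorem two_mul_card_sub_one_le_qrad_deleteEdges {K : Finset V} {E : Set (Sym2 V)}
    (hs : s.Nonempty) (hclique : H.IsClique (s : Set V)) (hK : ∀ v ∈ K, ∀ u ∉ s, H.Adj v u)
    (hE : ∀ e ∈ E, ∀ v ∈ e, v ∈ s) (hcard : 4 * E.ncard ≤ #K * #sᶜ) :
    2 * ((#s : ℝ) - 1) ≤ qrad (H.deleteEdges E) := by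
  have hinner := card_mul_card_sub_one_le_sum_card_neighborFinset_inter hclique E
  -- `H` is loopless, so a vertex adjacent to all of `sᶜ` lies in `s`.
  have hKs : K ⊆ s := fun v hv => by_contra fun hvs => H.irrefl (hK v hv v hvs)
  have hcross : #K * #sᶜ ≤ ∑ v ∈ s, #((H.deleteEdges E).neighborFinset v \ s) :=
    calc #K * #sᶜ = ∑ v ∈ K, #sᶜ := by rw [sum_const, smul_eq_mul]
      _ ≤ ∑ v ∈ K, #((H.deleteEdges E).neighborFinset v \ s) :=
          sum_le_sum fun v hv => card_compl_le_card_neighborFinset_sdiff hE (hK v hv)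
      _ ≤ _ := sum_le_sum_of_subset hKs
  have hcount : 2 * (#s * (#s - 1)) ≤
      ∑ v ∈ s, ((H.deleteEdges E).degree v + #((H.deleteEdges E).neighborFinset v ∩ s)) := by
    simp_rw [← card_neighborFinset_eq_degree,
      ← card_inter_add_card_sdiff ((H.deleteEdges E).neighborFinset _) s]
    simp only [sum_add_distrib]
    omega
  have hq := sum_degree_add_card_inter_le_qrad_mul_card (H.deleteEdges E) s
  have hs1 : 1 ≤ #s := hs.card_pos
  have hpos : (0 : ℝ) < #s := by exact_mod_cast hs1
  rw [← mul_le_mul_iff_of_pos_right hpos]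
  calc 2 * ((#s : ℝ) - 1) * #s = ((2 * (#s * (#s - 1)) : ℕ) : ℝ) := by push_cast [hs1]; ring
    _ ≤ _ := by exact_mod_cast hcount
    _ ≤ _ := hq

end

theorem two_mul_sub_le_qrad_deleteEdges_of_fin {n k m : ℕ} (hk : 1 ≤ k) (hkn : k ≤ n)
    (hmn : m ≤ n) {H : SimpleGraph (Fin n)} {E : Set (Sym2 (Fin n))}
    (hclique : ∀ i j : Fin n, i.val ≤ n - k → j.val ≤ n - k → i ≠ j → H.Adj i j)
    (hcross : ∀ i j : Fin n, i.val < m → n - k < j.val → H.Adj i j)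
    (hE : ∀ e ∈ E, ∀ i ∈ e, i.val ≤ n - k) (hcard : 4 * E.ncard ≤ m * (k - 1)) :
    2 * (n : ℝ) - 2 * k ≤ qrad (H.deleteEdges E) := by
  set s : Finset (Fin n) := {i | (i : ℕ) < n - k + 1}
  have hmem : ∀ i : Fin n, i ∈ s ↔ i.val ≤ n - k := fun i => by simp [s]
  have hs : #s = n - k + 1 := by simp only [s, Fin.card_filter_val_lt]; omega
  have hsc : #sᶜ = k - 1 := by rw [card_compl, Fintype.card_fin, hs]; omega
  have hK : #({i | (i : ℕ) < m} : Finset (Fin n)) = m := by rw [Fin.card_filter_val_lt]; omega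
  have key := two_mul_card_sub_one_le_qrad_deleteEdges (s := s) (K := {i | (i : ℕ) < m})
    (card_pos.mp (by omega))
    (fun i hi j hj hij => hclique i j ((hmem i).mp hi) ((hmem j).mp hj) hij)
    (fun i hi j hj => hcross i j (by simpa using hi) (by rw [hmem] at hj; omega))
    (fun e he i hi => (hmem i).mpr (hE e he i hi))
    (by rw [hK, hsc]; exact hcard)
  rw [hs] at key
  push_cast [Nat.cast_sub hkn] at key ⊢
  linarith

theorem two_mul_sub_le_qrad_of_mem_SFam1 {n k : ℕ} (hk : 1 ≤ k) (hkn : 2 * k ≤ n)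
    {G : SimpleGraph (Fin n)} (hG : G ∈ SFam1 n k) : 2 * (n : ℝ) - 2 * k ≤ qrad G := by
  obtain ⟨E, hE, hcard, rfl⟩ := hG
  refine two_mul_sub_le_qrad_deleteEdges_of_fin (m := k) hk (by omega) (by omega)
    (fun i j hi hj hij => (fromRel_adj _ _ _).mpr ⟨hij, .inl (.inr ⟨hi, hj⟩)⟩)
    (fun i j hi hj => (fromRel_adj _ _ _).mpr ⟨Fin.ne_of_val_ne (by omega), .inl (.inl hi)⟩)
    (fun e he => (hE he).2) ?_
  calc 4 * E.ncard ≤ 4 * (k * (k - 1) / 4) := by omega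
    _ ≤ k * (k - 1) := Nat.mul_div_le _ 4

theorem two_mul_sub_le_qrad_of_mem_TFam1 {n k : ℕ} (hk : 1 ≤ k) (hkn : 2 * k ≤ n)
    {G : SimpleGraph (Fin n)} (hG : G ∈ TFam1 n k) : 2 * (n : ℝ) - 2 * k ≤ qrad G := by
  obtain ⟨E, hE, hcard, rfl⟩ := hG
  refine two_mul_sub_le_qrad_deleteEdges_of_fin (m := 2) hk (by omega) (by omega)
    (fun i j hi hj hij => (fromRel_adj _ _ _).mpr ⟨hij, .inl (.inr (.inl ⟨hi, hj⟩))⟩)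
    (fun i j hi hj => (fromRel_adj _ _ _).mpr ⟨Fin.ne_of_val_ne (by omega), .inl (.inl hi)⟩)
    (fun e he => (hE he).2) ?_
  calc 4 * E.ncard ≤ 4 * ((k - 1) / 2) := by omega
    _ ≤ 2 * (k - 1) := by have := Nat.mul_div_le (k - 1) 2; omega

theorem qrad_ge_of_fam1_general (n k : ℕ) (hk : 1 ≤ k) (hkn : 2 * k ≤ n)
    (G : SimpleGraph (Fin n)) (hG : G ∈ SFam1 n k ∪ TFam1 n k) :
    2 * (n : ℝ) - 2 * k ≤ qrad G := by
  rcases hG with hS | hT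
  · exact two_mul_sub_le_qrad_of_mem_SFam1 hk hkn hS
  · exact two_mul_sub_le_qrad_of_mem_TFam1 hk hkn hT

/-- **Lemma 3.2.** For each `G ∈ 𝒮_k^{(1)}(n) ∪ 𝒯_k^{(1)}(n)`, `q(G) ≥ 2n - 2k`. -/
theorem qrad_ge_of_fam1 (n k : ℕ) (hn : 5 ≤ n) (hk : 1 ≤ k) (hkn : 2 * k ≤ n)
    (G : SimpleGraph (Fin n)) (hG : G ∈ SFam1 n k ∪ TFam1 n k) :
    2 * (n : ℝ) - 2 * k ≤ qrad G :=
  qrad_ge_of_fam1_general n k hk hkn G hG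
end
end
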